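/- arXiv:2405.03661 — 3 statements merged into one kernel-verified Lean document; each statement's English description precedes it below -/
import Mathlib

section
/- Let D be a probability distribution over pairs (I, S), h : I → [k] a partition, C = (C^(1),...,C^(k)) arbitrary centers in a metric space, and for each i let C_h^(i) be any point minimizing E[d(S, C) | h(I) = i]. Define φ(i) to be the index j minimizing d(C^(j), C_h^(i)). Then the expected loss E[d(S, C^(φ(h(I))))] is at most 2·E[d(S, C_h^(h(I)))] + E[min_j d(S, C^(j))]. -/
open Finset MeasureTheory ProbabilityTheory

/-
The bound holds pointwise, so it survives integration. For a sample `(I, S)` with `i = h(I)`,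
the triangle inequality through `Ch i` gives `d(S, C(φ i)) ≤ d(S, Ch i) + d(Ch i, C(φ i))`;
by the choice of `φ i` the last term is at most `d(Ch i, C j)` for the center `C j` nearest
to `S`, and a second triangle inequality through `S` bounds it by `d(Ch i, S) + d(S, C j)`.
-/

theorem dist_le_two_mul_dist_add_dist_of_dist_le {X : Type*} [PseudoMetricSpace X]
    {x y c c' : X} (hc : dist c c' ≤ dist y c') :
    dist x c ≤ 2 * dist x c' + dist x y :=
  calc dist x c ≤ dist x c' + dist c' c := dist_triangle _ _ _
    _ ≤ dist x c' + dist c' y := by rw [dist_comm c', dist_comm c']; gcongr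
    _ ≤ dist x c' + (dist c' x + dist x y) := by gcongr; exact dist_triangle _ _ _
    _ = 2 * dist x c' + dist x y := by rw [dist_comm c' x]; ring

theorem dist_le_two_mul_dist_add_inf'_dist {X κ : Type*} [PseudoMetricSpace X]
    {s : Finset κ} (hs : s.Nonempty) (C : κ → X) {x c' : X} {a : κ}
    (ha : ∀ j ∈ s, dist (C a) c' ≤ dist (C j) c') :
    dist x (C a) ≤ 2 * dist x c' + s.inf' hs fun j => dist x (C j) := by
  rw [← sub_le_iff_le_add']
  exact le_inf' hs _ fun j hj =>
    sub_le_iff_le_add'.mpr (dist_le_two_mul_dist_add_dist_of_dist_le (ha j hj))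

theorem stmt2_general {Ω ι S : Type*} [MeasurableSpace Ω] [MetricSpace S]
    (μ : Measure Ω)
    (Inst : Ω → ι) (Sol : Ω → S) {k : ℕ} (hk : 0 < k)
    (h : ι → Fin k) (C Ch : Fin k → S)
    (φ : Fin k → Fin k)
    (hφ : ∀ i j : Fin k, dist (C (φ i)) (Ch i) ≤ dist (C j) (Ch i))
    (hint2 : Integrable (fun ω => dist (Sol ω) (Ch (h (Inst ω)))) μ)
    (hint3 : Integrable
      (fun ω => univ.inf' (univ_nonempty_iff.mpr ⟨⟨0, hk⟩⟩) fun j => dist (Sol ω) (C j)) μ) :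
    ∫ ω, dist (Sol ω) (C (φ (h (Inst ω)))) ∂μ ≤
      2 * ∫ ω, dist (Sol ω) (Ch (h (Inst ω))) ∂μ +
        ∫ ω, univ.inf' (univ_nonempty_iff.mpr ⟨⟨0, hk⟩⟩) (fun j => dist (Sol ω) (C j)) ∂μ := by
  rw [← integral_const_mul, ← integral_add (hint2.const_mul 2) hint3]
  exact integral_mono_of_nonneg (.of_forall fun _ => dist_nonneg) ((hint2.const_mul 2).add hint3)
    (.of_forall fun ω => dist_le_two_mul_dist_add_inf'_dist _ C fun j _ => hφ _ j)

/-- Rotation lemma: the expected loss of the rotated partition `φ ∘ h` with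
    centers `C` is at most `2 · cost(h, D) + cost(C, D)`. -/
theorem stmt2 {Ω ι S : Type*} [MeasurableSpace Ω] [MetricSpace S]
    (μ : Measure Ω) [IsProbabilityMeasure μ]
    (Inst : Ω → ι) (Sol : Ω → S) {k : ℕ} (hk : 0 < k)
    (h : ι → Fin k) (C Ch : Fin k → S)
    (hCh : ∀ i : Fin k, ∀ c : S,
      ∫ ω, dist (Sol ω) (Ch i) ∂(μ[|{ω | h (Inst ω) = i}]) ≤
        ∫ ω, dist (Sol ω) c ∂(μ[|{ω | h (Inst ω) = i}]))
    (φ : Fin k → Fin k)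
    (hφ : ∀ i j : Fin k, dist (C (φ i)) (Ch i) ≤ dist (C j) (Ch i))
    (hint1 : Integrable (fun ω => dist (Sol ω) (C (φ (h (Inst ω))))) μ)
    (hint2 : Integrable (fun ω => dist (Sol ω) (Ch (h (Inst ω)))) μ)
    (hint3 : Integrable
      (fun ω => univ.inf' (univ_nonempty_iff.mpr ⟨⟨0, hk⟩⟩) fun j => dist (Sol ω) (C j)) μ) :
    ∫ ω, dist (Sol ω) (C (φ (h (Inst ω)))) ∂μ ≤
      2 * ∫ ω, dist (Sol ω) (Ch (h (Inst ω))) ∂μ +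
        ∫ ω, univ.inf' (univ_nonempty_iff.mpr ⟨⟨0, hk⟩⟩) (fun j => dist (Sol ω) (C j)) ∂μ :=
  stmt2_general μ Inst Sol hk h C Ch φ hφ hint2 hint3
end

section
/- For any sequence of requests S_1,...,S_T in a metric space and any collection of k trajectories serving them, the optimal offline k-server cost to serve the sequence is at most twice the cost (hit cost plus movement cost) of the trajectory collection. -/
/-!
Serve request `t` by moving server `a t` (the index of the trajectory of day `t`) to `Req t`.
That server then travels from the previous request of its trajectory (or from the origin) to
`Req t`, and the triangle inequality through `P (prev t)` and `P t` bounds this by the movement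
cost of day `t` plus the hit costs of days `t` and `prev t`. Since `prev` is injective, each
hit cost is charged at most twice, while each movement cost is charged once.
-/

open Finset Function

theorem Finset.sum_option_elim_le_sum {ι : Type*} [Fintype ι] {f : ι → ℝ} (hf : ∀ i, 0 ≤ f i)
    (g : ι → Option ι) (hg : ∀ i j u, g i = some u → g j = some u → i = j) :
    ∑ i, (g i).elim 0 f ≤ ∑ u, f u := by
  classical
  have elim_eq (x : Option ι) : x.elim 0 f = ∑ u, if x = some u then f u else 0 := by
    cases x <;> simp
  calc ∑ i, (g i).elim 0 f
      = ∑ u, #{i | g i = some u} • f u := by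
        simp only [elim_eq]
        rw [Finset.sum_comm]
        simp [← Finset.sum_filter]
    _ ≤ ∑ u, f u := by
        gcongr with u
        have hcard : #{i | g i = some u} ≤ 1 :=
          Finset.card_le_one.mpr fun i hi j hj => hg i j u (by simpa using hi) (by simpa using hj)
        simpa using mul_le_of_le_one_left (hf u) (by exact_mod_cast hcard)

theorem sum_dist_update {ι S : Type*} [Fintype ι] [DecidableEq ι] [PseudoMetricSpace S]
    (f : ι → S) (i : ι) (x : S) : ∑ j, dist (f j) (update f i x j) = dist (f i) x := by
  rw [Finset.sum_eq_single i (fun j _ hj => by simp [update_of_ne hj]) (by simp)]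
  simp

theorem dist_option_elim_le {ι S : Type*} [PseudoMetricSpace S] (Req P : ι → S) (o : S)
    (x : Option ι) (y z : S) :
    dist (x.elim o Req) y ≤ x.elim 0 (fun i => dist (P i) (Req i)) + dist (x.elim o P) z
      + dist z y := by
  cases x with
  | none => simpa using dist_triangle o z y
  | some i =>
    have := dist_triangle (Req i) (P i) y
    have := dist_triangle (P i) z y
    simp only [Option.elim, dist_comm (Req i) (P i)] at *
    linarith

section GreedyServers

variable {S : Type*} {T k : ℕ} (Req : Fin T → S) (o : S) (a : Fin T → Fin k)

def greedyServers : ℕ → Fin k → S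
  | 0 => fun _ => o
  | n + 1 =>
    if h : n < T then update (greedyServers n) (a ⟨n, h⟩) (Req ⟨n, h⟩) else greedyServers n

theorem greedyServers_succ (t : Fin T) :
    greedyServers Req o a (t + 1) = update (greedyServers Req o a t) (a t) (Req t) := by
  simp [greedyServers, t.isLt]

theorem greedyServers_succ_apply_self (t : Fin T) :
    greedyServers Req o a (t + 1) (a t) = Req t := by
  simp [greedyServers_succ]

theorem greedyServers_eq_of_forall_ne {s : Fin k} {m n : ℕ} (hmn : m ≤ n)
    (h : ∀ t : Fin T, m ≤ t → t < n → a t ≠ s) :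
    greedyServers Req o a n s = greedyServers Req o a m s := by
  induction n, hmn using Nat.le_induction with
  | base => rfl
  | succ n hmn ih =>
    rw [← ih fun t h₁ h₂ => h t h₁ (by omega)]
    by_cases hn : n < T
    · simp only [greedyServers, hn, dite_true]
      exact update_of_ne (h ⟨n, hn⟩ hmn (by simp)).symm _ _
    · simp [greedyServers, hn]

theorem greedyServers_apply_self (prev : Fin T → Option (Fin T))
    (hprev_some : ∀ t t', prev t = some t' →
      t' < t ∧ a t' = a t ∧ ∀ t'', t' < t'' → t'' < t → a t'' ≠ a t)
    (hprev_none : ∀ t, prev t = none → ∀ t' : Fin T, t' < t → a t' ≠ a t) (t : Fin T) :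
    greedyServers Req o a t (a t) = (prev t).elim o Req := by
  cases hp : prev t with
  | none =>
    exact greedyServers_eq_of_forall_ne Req o a (Nat.zero_le _)
      fun t' _ ht' => hprev_none t hp t' ht'
  | some t' =>
    obtain ⟨hlt, hat, hlast⟩ := hprev_some t t' hp
    rw [Option.elim, greedyServers_eq_of_forall_ne Req o a (m := t' + 1) hlt
      fun t'' h₁ h₂ => hlast t'' h₁ h₂, ← hat, greedyServers_succ_apply_self]

theorem sum_range_greedyServers_movement [PseudoMetricSpace S] :
    ∑ n ∈ range T, ∑ s, dist (greedyServers Req o a n s) (greedyServers Req o a (n + 1) s) =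
      ∑ t : Fin T, dist (greedyServers Req o a t (a t)) (Req t) := by
  rw [← Fin.sum_univ_eq_sum_range]
  simp_rw [greedyServers_succ, sum_dist_update]

end GreedyServers

theorem prev_eq_some_injective {T k : ℕ} {a : Fin T → Fin k} {prev : Fin T → Option (Fin T)}
    (hprev_some : ∀ t t', prev t = some t' →
      t' < t ∧ a t' = a t ∧ ∀ t'', t' < t'' → t'' < t → a t'' ≠ a t)
    (t₁ t₂ u : Fin T) (h₁ : prev t₁ = some u) (h₂ : prev t₂ = some u) : t₁ = t₂ := by
  obtain ⟨hu₁, ha₁, hlast₁⟩ := hprev_some t₁ u h₁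
  obtain ⟨hu₂, ha₂, hlast₂⟩ := hprev_some t₂ u h₂
  rcases lt_trichotomy t₁ t₂ with h | h | h
  · exact absurd (ha₁.symm.trans ha₂) (hlast₂ t₁ hu₁ h)
  · exact h
  · exact absurd (ha₂.symm.trans ha₁) (hlast₁ t₂ hu₂ h)

theorem stmt4_general {S : Type*} [MetricSpace S] {T k : ℕ}
    (Req : Fin T → S) (o : S)
    (a : Fin T → Fin k) (P : Fin T → S)
    (prev : Fin T → Option (Fin T))
    (hprev_some : ∀ t t', prev t = some t' →
      t' < t ∧ a t' = a t ∧ ∀ t'', t' < t'' → t'' < t → a t'' ≠ a t)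
    (hprev_none : ∀ t, prev t = none → ∀ t' : Fin T, t' < t → a t' ≠ a t) :
    ∃ pos : ℕ → Fin k → S,
      (pos 0 = fun _ => o) ∧
      (∀ t : Fin T, ∃ s : Fin k, pos ((t : ℕ) + 1) s = Req t) ∧
      (∑ n ∈ Finset.range T, ∑ s : Fin k, dist (pos n s) (pos (n + 1) s)) ≤
        2 * ((∑ t : Fin T, dist (P t) (Req t)) +
              ∑ t : Fin T, dist ((prev t).elim o P) (P t)) := by
  refine ⟨greedyServers Req o a, rfl,
    fun t => ⟨a t, greedyServers_succ_apply_self Req o a t⟩, ?_⟩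
  set hit : Fin T → ℝ := fun t => dist (P t) (Req t)
  have hmove : 0 ≤ ∑ t : Fin T, dist ((prev t).elim o P) (P t) := by positivity
  rw [sum_range_greedyServers_movement]
  simp_rw [greedyServers_apply_self Req o a prev hprev_some hprev_none]
  calc ∑ t, dist ((prev t).elim o Req) (Req t)
      ≤ ∑ t, ((prev t).elim 0 hit + dist ((prev t).elim o P) (P t) + hit t) :=
        sum_le_sum fun t _ => dist_option_elim_le Req P o (prev t) (Req t) (P t)
    _ ≤ ∑ t, hit t + ∑ t, dist ((prev t).elim o P) (P t) + ∑ t, hit t := by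
        simp only [sum_add_distrib]
        gcongr ?_ + _ + _
        exact sum_option_elim_le_sum (f := hit) (fun _ => dist_nonneg) prev
          (prev_eq_some_injective hprev_some)
    _ ≤ _ := by linarith

/-- For any collection of `k` trajectories serving requests `Req`, there is an
    offline `k`-server solution with movement cost at most twice the trajectory
    cost (hit cost plus movement cost); hence `serveropt_k ≤ 2 · cost(trajectories)`. -/
theorem stmt4 {S : Type*} [MetricSpace S] {T k : ℕ} (hk : 0 < k)
    (Req : Fin T → S) (o : S)
    (a : Fin T → Fin k) (P : Fin T → S)
    (prev : Fin T → Option (Fin T))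
    (hprev_some : ∀ t t', prev t = some t' →
      t' < t ∧ a t' = a t ∧ ∀ t'', t' < t'' → t'' < t → a t'' ≠ a t)
    (hprev_none : ∀ t, prev t = none → ∀ t' : Fin T, t' < t → a t' ≠ a t) :
    ∃ pos : ℕ → Fin k → S,
      (pos 0 = fun _ => o) ∧
      (∀ t : Fin T, ∃ s : Fin k, pos ((t : ℕ) + 1) s = Req t) ∧
      (∑ n ∈ Finset.range T, ∑ s : Fin k, dist (pos n s) (pos (n + 1) s)) ≤
        2 * ((∑ t : Fin T, dist (P t) (Req t)) +
              ∑ t : Fin T, dist ((prev t).elim o P) (P t)) :=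
  stmt4_general Req o a P prev hprev_some hprev_none
end

section
/- Subsuming identity: if the relation 'thread i subsumes thread j' is maintained by the rule that i kills j only when d(S_i, S_j) ≤ radius(i) − radius(j), subsumption is transitively propagated, and subsumed threads' radii grow at the same rate as their subsumers, then at all times, whenever i subsumes j, d(S_i, S_j) ≤ radius(i) − radius(j). -/
theorem dist_le_sub_trans {X : Type*} [PseudoMetricSpace X] {x y z : X} {a b c : ℝ}
    (hxy : dist x y ≤ a - b) (hyz : dist y z ≤ b - c) : dist x z ≤ a - c := by
  linarith [dist_triangle x y z]

theorem stmt7_general {S ι : Type*} [MetricSpace S] (Spt : ι → S)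
    (R : ℕ → ι → ι → Prop) (radius : ℕ → ι → ℝ)
    (h0 : ∀ i j, ¬ R 0 i j)
    (hrate : ∀ n i j, R n i j →
      radius (n + 1) i - radius (n + 1) j = radius n i - radius n j)
    (hnew : ∀ n i j, R (n + 1) i j → ¬ R n i j →
      dist (Spt i) (Spt j) ≤ radius (n + 1) i - radius (n + 1) j ∨
      ∃ m, dist (Spt i) (Spt m) ≤ radius (n + 1) i - radius (n + 1) m ∧ R n m j) :
    ∀ n i j, R n i j → dist (Spt i) (Spt j) ≤ radius n i - radius n j := by
  intro n
  induction n with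
  | zero => exact fun i j hij => absurd hij (h0 i j)
  | succ n ih =>
    have persists : ∀ i j, R n i j →
        dist (Spt i) (Spt j) ≤ radius (n + 1) i - radius (n + 1) j := fun i j hij => by
      rw [hrate n i j hij]
      exact ih i j hij
    intro i j hij
    by_cases hold : R n i j
    · exact persists i j hold
    · rcases hnew n i j hij hold with hkill | ⟨m, hkill, hmj⟩
      · exact hkill
      · exact dist_le_sub_trans hkill (persists m j hmj)

/-- Subsuming identity: under the kill/propagation/rate rules of the quadratic
    decay algorithm, whenever thread `i` subsumes thread `j` we have
    `d(S_i, S_j) ≤ radius(i) − radius(j)`. -/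
theorem stmt7 {S ι : Type*} [MetricSpace S] (Spt : ι → S)
    (R : ℕ → ι → ι → Prop) (radius : ℕ → ι → ℝ)
    (h0 : ∀ i j, ¬ R 0 i j)
    (hmono : ∀ n i j, R n i j → R (n + 1) i j)
    (hrate : ∀ n i j, R n i j →
      radius (n + 1) i - radius (n + 1) j = radius n i - radius n j)
    (hnew : ∀ n i j, R (n + 1) i j → ¬ R n i j →
      dist (Spt i) (Spt j) ≤ radius (n + 1) i - radius (n + 1) j ∨
      ∃ m, dist (Spt i) (Spt m) ≤ radius (n + 1) i - radius (n + 1) m ∧ R n m j) :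
    ∀ n i j, R n i j → dist (Spt i) (Spt j) ≤ radius n i - radius n j :=
  stmt7_general Spt R radius h0 hrate hnew
end
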